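/- arXiv:1301.0496 — 4 statements merged into one kernel-verified Lean document; each statement's English description precedes it below -/
import Mathlib

section
/- Let ABCD be a quadrilateral in the plane with all four triangles ABC, CDA, BCD, DAB nondegenerate, and suppose the signed area of ABCD is nonzero. Then the affine combination (A(ABC)·C(ABC) + A(CDA)·C(CDA))/(A(ABC)+A(CDA)) equals (A(BCD)·C(BCD) + A(DAB)·C(DAB))/(A(BCD)+A(DAB)), where A(·) denotes signed area and C(·) denotes circumcenter. -/
/-!
The signed area of a triangle is a shoelace sum over its oriented edges, and so is the signed area
times the circumcenter: solving the two linear equations for the circumcenter gives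
`4 S O = Σ |P|² (Q - R)^⊥`, with `v^⊥ = (v.2, -v.1)`, over the cyclic permutations `P Q R` of
the vertices, which regroups as a sum of the antisymmetric `edgeMoment P Q` over the edges `P → Q`.
Adding the triangles `ABC` and `CDA` (or `BCD` and `DAB`), the contributions of the shared
diagonal cancel, so both weighted sums equal the same boundary sum over `ABCD`.
-/

/-- 2×2 determinant of two plane vectors. -/
noncomputable def det2 (u v : ℝ × ℝ) : ℝ := u.1 * v.2 - u.2 * v.1

/-- Signed area of the oriented triangle `A B C`. -/
noncomputable def sarea (A B C : ℝ × ℝ) : ℝ := det2 (B - A) (C - A) / 2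

/-- Squared Euclidean distance in the plane. -/
noncomputable def sqd (P Q : ℝ × ℝ) : ℝ := (P.1 - Q.1) ^ 2 + (P.2 - Q.2) ^ 2

/-- `O` is equidistant from the three vertices `A`, `B`, `C`. -/
def isCircumcenter (O A B C : ℝ × ℝ) : Prop := sqd O A = sqd O B ∧ sqd O A = sqd O C

noncomputable def edgeMoment (P Q : ℝ × ℝ) : ℝ × ℝ :=
  (((P.1 ^ 2 + P.2 ^ 2) * Q.2 - (Q.1 ^ 2 + Q.2 ^ 2) * P.2) / 4,
    ((Q.1 ^ 2 + Q.2 ^ 2) * P.1 - (P.1 ^ 2 + P.2 ^ 2) * Q.1) / 4)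

lemma edgeMoment_swap (P Q : ℝ × ℝ) : edgeMoment Q P = -edgeMoment P Q := by
  ext <;> simp only [edgeMoment, Prod.fst_neg, Prod.snd_neg] <;> ring

lemma sarea_smul_of_isCircumcenter {O A B C : ℝ × ℝ} (h : isCircumcenter O A B C) :
    sarea A B C • O = edgeMoment A B + edgeMoment B C + edgeMoment C A := by
  obtain ⟨hB, hC⟩ := h
  simp only [sqd] at hB hC
  ext <;> simp only [sarea, det2, edgeMoment, Prod.smul_fst, Prod.smul_snd, Prod.fst_add,
    Prod.snd_add, Prod.fst_sub, Prod.snd_sub, smul_eq_mul]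
  · linear_combination (C.2 - A.2) / 4 * hB - (B.2 - A.2) / 4 * hC
  · linear_combination (B.1 - A.1) / 4 * hC - (C.1 - A.1) / 4 * hB

lemma sarea_add_sarea_eq (A B C D : ℝ × ℝ) :
    sarea A B C + sarea C D A = sarea B C D + sarea D A B := by
  simp only [sarea, det2, Prod.fst_sub, Prod.snd_sub]
  ring

lemma sarea_smul_add_sarea_smul_eq {A B C D OA OC OB OD : ℝ × ℝ}
    (hA : isCircumcenter OA A B C) (hC : isCircumcenter OC C D A)
    (hB : isCircumcenter OB B C D) (hD : isCircumcenter OD D A B) :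
    sarea A B C • OA + sarea C D A • OC = sarea B C D • OB + sarea D A B • OD := by
  rw [sarea_smul_of_isCircumcenter hA, sarea_smul_of_isCircumcenter hC,
    sarea_smul_of_isCircumcenter hB, sarea_smul_of_isCircumcenter hD,
    edgeMoment_swap A C, edgeMoment_swap B D]
  abel

theorem stmt1_general (A B C D CA CB CC CD : ℝ × ℝ)
    (hCA : isCircumcenter CA A B C) (hCB : isCircumcenter CB C D A)
    (hCC : isCircumcenter CC B C D) (hCD : isCircumcenter CD D A B) :
    (sarea A B C + sarea C D A)⁻¹ • (sarea A B C • CA + sarea C D A • CB) =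
      (sarea B C D + sarea D A B)⁻¹ • (sarea B C D • CC + sarea D A B • CD) := by
  rw [sarea_add_sarea_eq A B C D, sarea_smul_add_sarea_smul_eq hCA hCB hCC hCD]

theorem stmt1 (A B C D CA CB CC CD : ℝ × ℝ)
    (hABC : sarea A B C ≠ 0) (hCDA : sarea C D A ≠ 0)
    (hBCD : sarea B C D ≠ 0) (hDAB : sarea D A B ≠ 0)
    (harea : sarea A B C + sarea C D A ≠ 0)
    (hCA : isCircumcenter CA A B C) (hCB : isCircumcenter CB C D A)
    (hCC : isCircumcenter CC B C D) (hCD : isCircumcenter CD D A B) :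
    (sarea A B C + sarea C D A)⁻¹ • (sarea A B C • CA + sarea C D A • CB) =
      (sarea B C D + sarea D A B)⁻¹ • (sarea B C D • CC + sarea D A B • CD) :=
  stmt1_general A B C D CA CB CC CD hCA hCB hCC hCD
end

section
/- For an n-gon P with vertices Vi = (xi, yi) (indices mod n) and nonzero signed area A(P), the circumcenter of mass of P (defined as the sum over i of (Ai/A(P))·Ci where Ci is the circumcenter and Ai the signed area of triangle O Vi Vi+1 with O the origin) equals (1/(4A(P))) · ( Σi yi(x_{i-1}² + y_{i-1}² − x_{i+1}² − y_{i+1}²), −Σi xi(x_{i-1}² + y_{i-1}² − x_{i+1}² − y_{i+1}²) ). -/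
open Finset

/-- Squared norm of a plane vector. -/
noncomputable def nsq (v : ℝ × ℝ) : ℝ := v.1 ^ 2 + v.2 ^ 2

/-- Equidistance from `0`, `P`, `Q` gives the linear system `2⟪C, P⟫ = |P|²`, `2⟪C, Q⟫ = |Q|²`,
which Cramer's rule solves with denominator `2 det(P, Q)`, i.e. four times the signed area. -/
theorem area_smul_circumcenter {P Q C : ℝ × ℝ} (hC : isCircumcenter C 0 P Q) :
    ((P.1 * Q.2 - Q.1 * P.2) / 2) • C =
      ((nsq P * Q.2 - nsq Q * P.2) / 4, (nsq Q * P.1 - nsq P * Q.1) / 4) := by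
  obtain ⟨hP, hQ⟩ := hC
  simp only [sqd, Prod.fst_zero, Prod.snd_zero, sub_zero] at hP hQ
  ext
  · simp only [Prod.smul_fst, smul_eq_mul, nsq]
    linear_combination (Q.2 / 4) * hP - (P.2 / 4) * hQ
  · simp only [Prod.smul_snd, smul_eq_mul, nsq]
    linear_combination (-Q.1 / 4) * hP + (P.1 / 4) * hQ

section CyclicSums

variable {G R : Type*} [AddGroup G] [Fintype G] [CommRing R]

theorem Fintype.sum_mul_add_eq (f g : G → R) (a : G) :
    ∑ i, f i * g (i + a) = ∑ i, f (i - a) * g i := by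
  rw [← (Equiv.subRight a).sum_comp]
  simp only [Equiv.subRight_apply, sub_add_cancel]

theorem Fintype.sum_mul_add_sub_mul_add_eq (f g : G → R) (a : G) :
    ∑ i, (f i * g (i + a) - f (i + a) * g i) = ∑ i, g i * (f (i - a) - f (i + a)) := by
  rw [sum_sub_distrib, Fintype.sum_mul_add_eq, ← sum_sub_distrib]
  exact Finset.sum_congr rfl fun i _ => by ring

end CyclicSums

theorem sum_area_smul_circumcenter {G : Type*} [AddGroup G] [Fintype G] (a : G)
    (V C : G → ℝ × ℝ) (hC : ∀ i, isCircumcenter (C i) 0 (V i) (V (i + a))) :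
    ∑ i, (((V i).1 * (V (i + a)).2 - (V (i + a)).1 * (V i).2) / 2) • C i = (4 : ℝ)⁻¹ •
      ((∑ i, (V i).2 * (nsq (V (i - a)) - nsq (V (i + a)))),
       (∑ i, -(V i).1 * (nsq (V (i - a)) - nsq (V (i + a))))) := by
  simp only [area_smul_circumcenter (hC _)]
  ext
  · rw [Prod.fst_sum, Prod.smul_fst, smul_eq_mul, inv_mul_eq_div, ← sum_div,
      ← Fintype.sum_mul_add_sub_mul_add_eq (fun i => nsq (V i)) (fun i => (V i).2)]
  · rw [Prod.snd_sum, Prod.smul_snd, smul_eq_mul, inv_mul_eq_div, ← sum_div]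
    simp only [neg_mul, sum_neg_distrib]
    rw [← Fintype.sum_mul_add_sub_mul_add_eq (fun i => nsq (V i)) (fun i => (V i).1),
      ← sum_neg_distrib]
    exact congrArg (· / 4) (Finset.sum_congr rfl fun i _ => by ring)

theorem stmt2_general (n : ℕ) [NeZero n] (V : ZMod n → ℝ × ℝ)
    -- signed area of triangle O Vᵢ Vᵢ₊₁, where O is the origin
    (A : ZMod n → ℝ) (hA : ∀ i, A i = ((V i).1 * (V (i + 1)).2 - (V (i + 1)).1 * (V i).2) / 2)
    -- total signed area of the polygon
    (AP : ℝ)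
    -- circumcenters of the triangles O Vᵢ Vᵢ₊₁
    (C : ZMod n → ℝ × ℝ) (hC : ∀ i, isCircumcenter (C i) 0 (V i) (V (i + 1))) :
    ∑ i, (A i / AP) • C i =
      (4 * AP)⁻¹ •
        ((∑ i, (V i).2 * (nsq (V (i - 1)) - nsq (V (i + 1)))),
         (∑ i, -(V i).1 * (nsq (V (i - 1)) - nsq (V (i + 1))))) := by
  calc ∑ i, (A i / AP) • C i = AP⁻¹ • ∑ i, A i • C i := by
        simp only [smul_sum, smul_smul, div_eq_inv_mul]
    _ = _ := by
        simp only [hA]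
        rw [sum_area_smul_circumcenter 1 V C hC, mul_inv, mul_comm, mul_smul]

theorem stmt2 (n : ℕ) [NeZero n] (V : ZMod n → ℝ × ℝ)
    -- signed area of triangle O Vᵢ Vᵢ₊₁, where O is the origin
    (A : ZMod n → ℝ) (hA : ∀ i, A i = ((V i).1 * (V (i + 1)).2 - (V (i + 1)).1 * (V i).2) / 2)
    -- nondegeneracy of each triangle O Vᵢ Vᵢ₊₁
    (hnd : ∀ i, (V i).1 * (V (i + 1)).2 - (V (i + 1)).1 * (V i).2 ≠ 0)
    -- total signed area of the polygon
    (AP : ℝ) (hAP : AP = ∑ i, A i) (hAP0 : AP ≠ 0)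
    -- circumcenters of the triangles O Vᵢ Vᵢ₊₁
    (C : ZMod n → ℝ × ℝ) (hC : ∀ i, isCircumcenter (C i) 0 (V i) (V (i + 1))) :
    ∑ i, (A i / AP) • C i =
      (4 * AP)⁻¹ •
        ((∑ i, (V i).2 * (nsq (V (i - 1)) - nsq (V (i + 1)))),
         (∑ i, -(V i).1 * (nsq (V (i - 1)) - nsq (V (i + 1))))) :=
  stmt2_general n V A hA AP C hC
end

section
/- The circumcenter of mass satisfies the Archimedes Lemma: if a polygon P is cut by a polygonal line into two polygons Q and R, then A(P)·CCM(P) = A(Q)·CCM(Q) + A(R)·CCM(R), where A denotes signed area. -/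
/-!
Write `g u v := sarea O u v • cc O u v`, so that `A(L) • CCM(L)` is the sum of `g` over the
consecutive vertex pairs of the closed polygon `L`. Splitting each closed polygon at `V_k`, the
three sums reduce to the same pieces, except that `Q` traverses the cut `V₀ X₁ … X_m V_k` backwards.
Since the circumcenter of a triangle does not depend on the orientation, `g v u = -g u v` along the
cut, so its contributions to `Q` and `R` cancel.
-/

open Finset

/-- `i`-th vertex of the closed polygon with vertex list `L`, indices cyclic. -/
noncomputable def cyc (L : List (ℝ × ℝ)) (i : ℕ) : ℝ × ℝ := L.getD (i % L.length) 0

/-- All triangles `O Wᵢ Wᵢ₊₁` of the triangulation of the polygon `L` from `O`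
are nondegenerate. -/
def triNondeg (O : ℝ × ℝ) (L : List (ℝ × ℝ)) : Prop :=
  ∀ i ∈ Finset.range L.length, sarea O (cyc L i) (cyc L (i + 1)) ≠ 0

/-- Total signed area of the polygon `L`, triangulated from `O`. -/
noncomputable def asum (O : ℝ × ℝ) (L : List (ℝ × ℝ)) : ℝ :=
  ∑ i ∈ Finset.range L.length, sarea O (cyc L i) (cyc L (i + 1))

/-- The circumcenter of mass of the polygon `L`, triangulated from the point `O`,
where `cc` is a function assigning to each (nondegenerate) triangle its circumcenter. -/
noncomputable def ccmList (cc : ℝ × ℝ → ℝ × ℝ → ℝ × ℝ → ℝ × ℝ) (O : ℝ × ℝ)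
    (L : List (ℝ × ℝ)) : ℝ × ℝ :=
  (asum O L)⁻¹ • ∑ i ∈ Finset.range L.length,
    sarea O (cyc L i) (cyc L (i + 1)) • cc O (cyc L i) (cyc L (i + 1))

section ChainSum

variable {α M : Type*} [AddCommGroup M]

def chainSum (g : α → α → M) : List α → M
  | [] => 0
  | [_] => 0
  | a :: b :: t => g a b + chainSum g (b :: t)

@[simp] lemma chainSum_nil (g : α → α → M) : chainSum g [] = 0 := rfl

@[simp] lemma chainSum_singleton (g : α → α → M) (a : α) : chainSum g [a] = 0 := rfl

@[simp] lemma chainSum_cons_cons (g : α → α → M) (a b : α) (t : List α) :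
    chainSum g (a :: b :: t) = g a b + chainSum g (b :: t) := rfl

lemma chainSum_append_cons (g : α → α → M) (x : α) (B : List α) :
    ∀ A : List α, chainSum g (A ++ x :: B) = chainSum g (A ++ [x]) + chainSum g (x :: B)
  | [] => by simp
  | [a] => by simp
  | a :: a' :: A => by
    have ih := chainSum_append_cons g x B (a' :: A)
    simp only [List.cons_append] at ih ⊢
    rw [chainSum_cons_cons, chainSum_cons_cons, ih, add_assoc]

lemma chainSum_reverse (g : α → α → M) :
    ∀ W : List α, W.IsChain (fun a b => g b a = -g a b) →
      chainSum g W.reverse = -chainSum g W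
  | [], _ => by simp
  | [a], _ => by simp
  | a :: b :: t, h => by
    obtain ⟨hab, ht⟩ := List.isChain_cons_cons.mp h
    have hrev : (a :: b :: t).reverse = t.reverse ++ b :: [a] := by simp
    have hlast : t.reverse ++ [b] = (b :: t).reverse := by simp
    rw [hrev, chainSum_append_cons, hlast, chainSum_reverse g (b :: t) ht, chainSum_cons_cons,
      chainSum_cons_cons, hab, chainSum_singleton]
    abel

lemma chainSum_eq_sum_getD (g : α → α → M) (d : α) :
    ∀ W : List α, chainSum g W = ∑ i ∈ range (W.length - 1), g (W.getD i d) (W.getD (i + 1) d)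
  | [] => by simp
  | [a] => by simp
  | a :: b :: t => by
    rw [chainSum_cons_cons, chainSum_eq_sum_getD g d (b :: t)]
    simp [sum_range_succ', add_comm]

lemma chainSum_cut (g : α → α → M) (a b : α) (A B X : List α)
    (hX : (a :: X ++ [b]).IsChain (fun u v => g v u = -g u v)) :
    chainSum g (a :: (A ++ [b] ++ B) ++ [a]) =
      chainSum g (a :: (A ++ [b] ++ X.reverse) ++ [a]) +
        chainSum g (a :: (X ++ [b] ++ B) ++ [a]) := by
  have hcut : chainSum g (b :: (X.reverse ++ [a])) = -chainSum g (a :: X ++ [b]) := by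
    rw [← chainSum_reverse g _ hX]
    simp
  have hsplit : ∀ C D : List α, a :: (C ++ [b] ++ D) ++ [a] = (a :: C) ++ b :: (D ++ [a]) := by
    simp
  rw [hsplit, hsplit, hsplit, chainSum_append_cons g b (B ++ [a]),
    chainSum_append_cons g b (X.reverse ++ [a]), chainSum_append_cons g b (B ++ [a]), hcut]
  abel

end ChainSum

lemma cyc_of_lt {L : List (ℝ × ℝ)} {i : ℕ} (hi : i < L.length) : cyc L i = L[i] := by
  rw [cyc, Nat.mod_eq_of_lt hi, List.getD_eq_getElem]

lemma cyc_eq_getD_append_head {a : ℝ × ℝ} {T : List (ℝ × ℝ)} {i : ℕ}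
    (hi : i ≤ (a :: T).length) : cyc (a :: T) i = (a :: T ++ [a]).getD i 0 := by
  rcases hi.lt_or_eq with hi | rfl
  · rw [cyc_of_lt hi, List.getD_append _ _ _ _ hi, List.getD_eq_getElem]
  · simp [cyc]

lemma sum_range_cyc_eq_chainSum {M : Type*} [AddCommGroup M] (g : ℝ × ℝ → ℝ × ℝ → M)
    (a : ℝ × ℝ) (T : List (ℝ × ℝ)) :
    ∑ i ∈ range (a :: T).length, g (cyc (a :: T) i) (cyc (a :: T) (i + 1)) =
      chainSum g (a :: T ++ [a]) := by
  rw [chainSum_eq_sum_getD g 0, List.length_append, List.length_singleton, Nat.add_sub_cancel]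
  refine sum_congr rfl fun i hi => ?_
  have hi : i < (a :: T).length := mem_range.mp hi
  rw [cyc_eq_getD_append_head hi.le, cyc_eq_getD_append_head hi]

lemma triNondeg.isChain {O : ℝ × ℝ} {L : List (ℝ × ℝ)} (h : triNondeg O L) :
    L.IsChain (fun u v => sarea O u v ≠ 0) := by
  refine List.isChain_iff_getElem.mpr fun i hi => ?_
  have := h i (mem_range.mpr (by omega))
  rwa [cyc_of_lt (by omega), cyc_of_lt hi] at this

lemma asum_smul_ccmList_eq_chainSum (cc : ℝ × ℝ → ℝ × ℝ → ℝ × ℝ → ℝ × ℝ) (O a : ℝ × ℝ)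
    (T : List (ℝ × ℝ)) (hA : asum O (a :: T) ≠ 0) :
    asum O (a :: T) • ccmList cc O (a :: T) =
      chainSum (fun u v => sarea O u v • cc O u v) (a :: T ++ [a]) := by
  rw [ccmList, smul_inv_smul₀ hA]
  exact sum_range_cyc_eq_chainSum (fun u v => sarea O u v • cc O u v) a T

lemma sarea_swap (O a b : ℝ × ℝ) : sarea O b a = -sarea O a b := by
  simp only [sarea, det2]; ring

lemma isCircumcenter.swap {c O a b : ℝ × ℝ} (h : isCircumcenter c O a b) :
    isCircumcenter c O b a :=
  ⟨h.2, h.1⟩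

/-- Subtracting the equidistance equations gives a linear system for the circumcenter whose determinant is
`2 · sarea O a b`. -/
lemma isCircumcenter_unique {c₁ c₂ O a b : ℝ × ℝ} (h : sarea O a b ≠ 0)
    (h₁ : isCircumcenter c₁ O a b) (h₂ : isCircumcenter c₂ O a b) : c₁ = c₂ := by
  obtain ⟨h₁a, h₁b⟩ := h₁
  obtain ⟨h₂a, h₂b⟩ := h₂
  simp only [sarea, det2, Prod.fst_sub, Prod.snd_sub] at h
  simp only [sqd] at h₁a h₁b h₂a h₂b
  have hd : (a.1 - O.1) * (b.2 - O.2) - (a.2 - O.2) * (b.1 - O.1) ≠ 0 := by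
    intro h0; exact h (by rw [h0, zero_div])
  refine Prod.ext (mul_right_cancel₀ hd ?_) (mul_right_cancel₀ hd ?_)
  · linear_combination (b.2 - O.2) / 2 * (h₁a - h₂a) - (a.2 - O.2) / 2 * (h₁b - h₂b)
  · linear_combination (a.1 - O.1) / 2 * (h₁b - h₂b) - (b.1 - O.1) / 2 * (h₁a - h₂a)

lemma sarea_smul_cc_swap (cc : ℝ × ℝ → ℝ × ℝ → ℝ × ℝ → ℝ × ℝ)
    (hcc : ∀ A B C : ℝ × ℝ, sarea A B C ≠ 0 → isCircumcenter (cc A B C) A B C)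
    {O a b : ℝ × ℝ} (h : sarea O a b ≠ 0) :
    sarea O b a • cc O b a = -(sarea O a b • cc O a b) := by
  have h' : sarea O b a ≠ 0 := by rwa [sarea_swap, neg_ne_zero]
  rw [isCircumcenter_unique h (hcc O a b h) (hcc O b a h').swap, sarea_swap, neg_smul]

theorem stmt8_general (cc : ℝ × ℝ → ℝ × ℝ → ℝ × ℝ → ℝ × ℝ)
    (hcc : ∀ A B C : ℝ × ℝ, sarea A B C ≠ 0 → isCircumcenter (cc A B C) A B C)
    (O V0 Vk : ℝ × ℝ) (M1 M2 X : List (ℝ × ℝ))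
    (P Q R : List (ℝ × ℝ))
    (hP : P = V0 :: (M1 ++ [Vk] ++ M2))
    (hQ : Q = V0 :: (M1 ++ [Vk] ++ X.reverse))
    (hR : R = V0 :: (X ++ [Vk] ++ M2))
    (hndR : triNondeg O R)
    (hAP : asum O P ≠ 0) (hAQ : asum O Q ≠ 0) (hAR : asum O R ≠ 0) :
    asum O P • ccmList cc O P = asum O Q • ccmList cc O Q + asum O R • ccmList cc O R := by
  subst hP hQ hR
  have hcut : (V0 :: X ++ [Vk]).IsChain
      (fun u v => sarea O v u • cc O v u = -(sarea O u v • cc O u v)) := by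
    have hchain := hndR.isChain
    rw [show V0 :: (X ++ [Vk] ++ M2) = (V0 :: X ++ [Vk]) ++ M2 by simp] at hchain
    exact hchain.left_of_append.imp fun _ _ => sarea_smul_cc_swap cc hcc
  rw [asum_smul_ccmList_eq_chainSum cc O _ _ hAP, asum_smul_ccmList_eq_chainSum cc O _ _ hAQ,
    asum_smul_ccmList_eq_chainSum cc O _ _ hAR]
  exact chainSum_cut _ V0 Vk M1 M2 X hcut

/-- Archimedes' Lemma for the circumcenter of mass: cutting the polygon
`P = V₀ V₁ … V_{n-1}` along the polygonal line `V₀ X₁ … X_m V_k` into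
`Q = V₀ … V_k X_m … X₁` and `R = V₀ X₁ … X_m V_k V_{k+1} … V_{n-1}` gives
`A(P)·CCM(P) = A(Q)·CCM(Q) + A(R)·CCM(R)`. -/
theorem stmt8 (cc : ℝ × ℝ → ℝ × ℝ → ℝ × ℝ → ℝ × ℝ)
    (hcc : ∀ A B C : ℝ × ℝ, sarea A B C ≠ 0 → isCircumcenter (cc A B C) A B C)
    (O V0 Vk : ℝ × ℝ) (M1 M2 X : List (ℝ × ℝ))
    (P Q R : List (ℝ × ℝ))
    (hP : P = V0 :: (M1 ++ [Vk] ++ M2))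
    (hQ : Q = V0 :: (M1 ++ [Vk] ++ X.reverse))
    (hR : R = V0 :: (X ++ [Vk] ++ M2))
    (hndP : triNondeg O P) (hndQ : triNondeg O Q) (hndR : triNondeg O R)
    (hAP : asum O P ≠ 0) (hAQ : asum O Q ≠ 0) (hAR : asum O R ≠ 0) :
    asum O P • ccmList cc O P = asum O Q • ccmList cc O Q + asum O R • ccmList cc O R :=
  stmt8_general cc hcc O V0 Vk M1 M2 X P Q R hP hQ hR hndR hAP hAQ hAR
end

section
/- The circumcenter of mass of a quadrilateral ABCD with nonzero signed area is the intersection point of the perpendicular bisectors of its two diagonals AC and BD. -/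
/-- The in-circle determinant `det [[x, y, x² + y², 1]]` of the four points `X, A, B, C`,
expanded along its last column after translating `X` to the origin. -/
noncomputable def inCircleDet (X A B C : ℝ × ℝ) : ℝ :=
  sqd A X * det2 (B - X) (C - X) + sqd B X * det2 (C - X) (A - X) +
    sqd C X * det2 (A - X) (B - X)

lemma inCircleDet_swap_pairs (X A B C : ℝ × ℝ) : inCircleDet X A B C = inCircleDet B C X A := by
  simp only [inCircleDet, sqd, det2, Prod.fst_sub, Prod.snd_sub]
  ring

lemma inCircleDet_eq_of_isCircumcenter {O A B C : ℝ × ℝ} (hO : isCircumcenter O A B C)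
    (X : ℝ × ℝ) : inCircleDet X A B C = 2 * sarea A B C * (sqd O A - sqd O X) := by
  obtain ⟨hB, hC⟩ := hO
  linear_combination (norm := skip) (-det2 (C - X) (A - X)) * hB + (-det2 (A - X) (B - X)) * hC
  simp only [inCircleDet, sarea, sqd, det2, Prod.fst_sub, Prod.snd_sub]
  ring

lemma sqd_sub_sqd_smul_add_smul {w₁ w₂ : ℝ} (hw : w₁ + w₂ ≠ 0) (Q₁ Q₂ U V : ℝ × ℝ) :
    sqd ((w₁ + w₂)⁻¹ • (w₁ • Q₁ + w₂ • Q₂)) U - sqd ((w₁ + w₂)⁻¹ • (w₁ • Q₁ + w₂ • Q₂)) V =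
      (w₁ + w₂)⁻¹ * (w₁ * (sqd Q₁ U - sqd Q₁ V) + w₂ * (sqd Q₂ U - sqd Q₂ V)) := by
  simp only [sqd, Prod.smul_fst, Prod.smul_snd, Prod.fst_add, Prod.snd_add, smul_eq_mul]
  field_simp
  ring

lemma sqd_eq_sqd_of_weighted_sum_eq_zero {w₁ w₂ : ℝ} (hw : w₁ + w₂ ≠ 0) {Q₁ Q₂ U V : ℝ × ℝ}
    (h : w₁ * (sqd Q₁ U - sqd Q₁ V) + w₂ * (sqd Q₂ U - sqd Q₂ V) = 0) :
    sqd ((w₁ + w₂)⁻¹ • (w₁ • Q₁ + w₂ • Q₂)) U = sqd ((w₁ + w₂)⁻¹ • (w₁ • Q₁ + w₂ • Q₂)) V := by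
  rw [← sub_eq_zero, sqd_sub_sqd_smul_add_smul hw, h, mul_zero]

theorem stmt9_general (A B C D C1 C2 P : ℝ × ℝ)
    (harea : sarea A B C + sarea C D A ≠ 0)
    (hC1 : isCircumcenter C1 A B C) (hC2 : isCircumcenter C2 C D A)
    (hP : P = (sarea A B C + sarea C D A)⁻¹ • (sarea A B C • C1 + sarea C D A • C2)) :
    sqd P A = sqd P C ∧ sqd P B = sqd P D := by
  subst hP
  refine ⟨sqd_eq_sqd_of_weighted_sum_eq_zero harea ?_, sqd_eq_sqd_of_weighted_sum_eq_zero harea ?_⟩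
  · rw [hC1.2, hC2.2, sub_self, sub_self, mul_zero, mul_zero, add_zero]
  · have hD := inCircleDet_eq_of_isCircumcenter hC1 D
    have hB := inCircleDet_eq_of_isCircumcenter hC2 B
    rw [inCircleDet_swap_pairs] at hD
    rw [← hC1.1, ← hC2.1]
    linear_combination (-hD + hB) / 2

/-- The circumcenter of mass of the quadrilateral `ABCD` lies on the
perpendicular bisectors of both diagonals `AC` and `BD`. -/
theorem stmt9 (A B C D C1 C2 P : ℝ × ℝ)
    (hABC : sarea A B C ≠ 0) (hCDA : sarea C D A ≠ 0)
    (harea : sarea A B C + sarea C D A ≠ 0)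
    (hC1 : isCircumcenter C1 A B C) (hC2 : isCircumcenter C2 C D A)
    (hP : P = (sarea A B C + sarea C D A)⁻¹ • (sarea A B C • C1 + sarea C D A • C2)) :
    sqd P A = sqd P C ∧ sqd P B = sqd P D :=
  stmt9_general A B C D C1 C2 P harea hC1 hC2 hP
end
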